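/- Let J be closed and η ∈ J*. Then: (a) the right orbit {λ_η · x : x ∈ U_J} of λ_η in 𝔫_J* has size q^{corank(η)}; (b) the left orbit {x · λ_η : x ∈ U_J} also has size q^{corank(η)}. -/

import Mathlib

open Matrix BigOperators

namespace SCT

/-- Pairs of indices. -/
abbrev Pr (n : ℕ) := Fin n × Fin n

/-- A closed subset `J ⊆ {(i,j) : i < j}`:  `(i,j) ∈ J` and `(j,k) ∈ J` imply `(i,k) ∈ J`. -/
def Closed {n : ℕ} (J : Finset (Pr n)) : Prop :=
  (∀ p ∈ J, p.1 < p.2) ∧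
  ∀ i j k : Fin n, (i, j) ∈ J → (j, k) ∈ J → (i, k) ∈ J

variable {F : Type*} [Field F] [Fintype F] [DecidableEq F] {n : ℕ}

/-- `X_φ = Σ_{(i,j) ∈ J} φ_{ij} X_{ij}`. -/
def Xmat (J : Finset (Pr n)) (φ : Pr n → F) : Matrix (Fin n) (Fin n) F :=
  Matrix.of fun i j => if (i, j) ∈ J then φ (i, j) else 0

/-- `x_φ = 1 + X_φ`. -/
def xmat (J : Finset (Pr n)) (φ : Pr n → F) : Matrix (Fin n) (Fin n) F :=
  1 + Xmat J φ

/-- `x_{ij}(t) = 1 + t X_{ij}`. -/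
def xelt (i j : Fin n) (t : F) : Matrix (Fin n) (Fin n) F :=
  1 + Matrix.single i j t

/-- The pattern group `U_J`, as a set of matrices: ones on the diagonal, entries off the
diagonal vanish outside `J`. -/
def UJ (J : Finset (Pr n)) : Set (Matrix (Fin n) (Fin n) F) :=
  {M | (∀ i, M i i = 1) ∧ ∀ i j : Fin n, i ≠ j → (i, j) ∉ J → M i j = 0}

/-- `𝔫_J`: matrices supported on `J`. -/
def nJset (J : Finset (Pr n)) : Set (Matrix (Fin n) (Fin n) F) :=
  {M | ∀ i j : Fin n, (i, j) ∉ J → M i j = 0}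

/-- The functional `λ_η` evaluated at a matrix of `𝔫_J`. -/
def lam (J : Finset (Pr n)) (η : Pr n → F) (X : Matrix (Fin n) (Fin n) F) : F :=
  ∑ p ∈ J, η p * X p.1 p.2

/-- A functional with coefficients indexed by `J` evaluated at a matrix. -/
def lamSub (J : Finset (Pr n)) (η : {p // p ∈ J} → F) (X : Matrix (Fin n) (Fin n) F) : F :=
  ∑ p ∈ J.attach, η p * X p.1.1 p.1.2

/-- The two-sided orbit `O_φ = U_J X_φ U_J ⊆ 𝔫_J`. -/
def biOrbit (J : Finset (Pr n)) (φ : Pr n → F) : Set (Matrix (Fin n) (Fin n) F) :=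
  {Y | ∃ u v : Matrix (Fin n) (Fin n) F, u ∈ UJ J ∧ v ∈ UJ J ∧ Y = u * Xmat J φ * v}

/-- `(M_φ^R)_{(i,l),(j,k)} = φ_{ij}` if `k = l` and `(i,j,l) ∈ 𝒫`, else `0`. -/
def MphiR (J : Finset (Pr n)) (φ : Pr n → F) : Matrix {p // p ∈ J} {p // p ∈ J} F :=
  Matrix.of fun p q =>
    if q.1.2 = p.1.2 ∧ (p.1.1, q.1.1) ∈ J ∧ (q.1.1, p.1.2) ∈ J then φ (p.1.1, q.1.1) else 0

/-- `(M_φ^L)_{(i,l),(j,k)} = φ_{kl}` if `i = j` and `(i,k,l) ∈ 𝒫`, else `0`. -/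
def MphiL (J : Finset (Pr n)) (φ : Pr n → F) : Matrix {p // p ∈ J} {p // p ∈ J} F :=
  Matrix.of fun p q =>
    if q.1.1 = p.1.1 ∧ (p.1.1, q.1.2) ∈ J ∧ (q.1.2, p.1.2) ∈ J then φ (q.1.2, p.1.2) else 0

/-- `(M_L^η)_{(j,k),(i,l)} = η_{ik}` if `l = j` and `(i,j,k) ∈ 𝒫`, else `0`. -/
def MetaL (J : Finset (Pr n)) (η : Pr n → F) : Matrix {p // p ∈ J} {p // p ∈ J} F :=
  Matrix.of fun p q =>
    if q.1.2 = p.1.1 ∧ (q.1.1, p.1.1) ∈ J ∧ (p.1.1, p.1.2) ∈ J then η (q.1.1, p.1.2) else 0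

/-- `(M_R^η)_{(j,k),(i,l)} = η_{jl}` if `k = i` and `(j,k,l) ∈ 𝒫`, else `0`. -/
def MetaR (J : Finset (Pr n)) (η : Pr n → F) : Matrix {p // p ∈ J} {p // p ∈ J} F :=
  Matrix.of fun p q =>
    if q.1.1 = p.1.2 ∧ (p.1.1, p.1.2) ∈ J ∧ (p.1.2, q.1.2) ∈ J then η (p.1.1, q.1.2) else 0

/-- `corank(η) = rank(M_L^η)`. -/
noncomputable def corank (J : Finset (Pr n)) (η : Pr n → F) : ℕ := (MetaL J η).rank

/-- `(M_φ^η)_{(i,j),(k,l)} = φ_{jk} η_{il}` if `(i,j,k,l) ∈ 𝒫`, else `0`. -/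
def Mmesh (J : Finset (Pr n)) (φ η : Pr n → F) : Matrix {p // p ∈ J} {p // p ∈ J} F :=
  Matrix.of fun p q =>
    if (p.1.2, q.1.1) ∈ J then φ (p.1.2, q.1.1) * η (p.1.1, q.1.2) else 0

/-- `(a_φ^η)_{(i,j)} = Σ_{(i,j,k) ∈ 𝒫} φ_{jk} η_{ik}`. -/
def aVec (J : Finset (Pr n)) (φ η : Pr n → F) : {p // p ∈ J} → F :=
  fun p => ∑ k : Fin n, if (p.1.2, k) ∈ J then φ (p.1.2, k) * η (p.1.1, k) else 0

/-- `(b_φ^η)_{(j,k)} = Σ_{(i,j,k) ∈ 𝒫} φ_{ij} η_{ik}`. -/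
def bVec (J : Finset (Pr n)) (φ η : Pr n → F) : {p // p ∈ J} → F :=
  fun p => ∑ i : Fin n, if (i, p.1.1) ∈ J then φ (i, p.1.1) * η (i, p.1.2) else 0

/-- `φ` meshes with `η`. -/
def Meshes (J : Finset (Pr n)) (φ η : Pr n → F) : Prop :=
  (∃ b : {p // p ∈ J} → F, (Mmesh J φ η).mulVec b = -aVec J φ η) ∧
  ∀ v : {p // p ∈ J} → F, (Mmesh J φ η).mulVec v = 0 → bVec J φ η ⬝ᵥ v = 0

/-- The supercharacter `χ^η` evaluated at `x_φ`. -/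
noncomputable def superchar (J : Finset (Pr n)) (θ : AddChar F ℂ) (η φ : Pr n → F) : ℂ :=
  ((Fintype.card F : ℂ) ^ corank J η / (Nat.card (biOrbit J φ) : ℂ)) *
    ∑ᶠ Y ∈ biOrbit J φ, (starRingEnd ℂ) (θ (lam J η Y))

/-- `χ` restricted to `U` is the character of an irreducible complex representation of `U`. -/
def IsIrredCharOn (U : Set (Matrix (Fin n) (Fin n) F))
    (χ : Matrix (Fin n) (Fin n) F → ℂ) : Prop :=
  ∃ d : ℕ, 0 < d ∧ ∃ ρ : Matrix (Fin n) (Fin n) F → Matrix (Fin d) (Fin d) ℂ,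
    ρ 1 = 1 ∧
    (∀ A ∈ U, ∀ B ∈ U, ρ (A * B) = ρ A * ρ B) ∧
    (∀ W : Submodule ℂ (Fin d → ℂ), (∀ A ∈ U, ∀ w ∈ W, (ρ A).mulVec w ∈ W) → W = ⊥ ∨ W = ⊤) ∧
    ∀ A ∈ U, (ρ A).trace = χ A

/-- The full set of positive roots. -/
def Jfull (n : ℕ) : Finset (Pr n) := Finset.univ.filter fun p : Pr n => p.1 < p.2

/-!  The total order and partial sum on positive roots. -/

/-- `α < β` in the total order: `(r,s) < (i,j)` iff `r > i`, or `r = i` and `s > j`. -/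
def rlt {n : ℕ} (a b : Pr n) : Prop := b.1 < a.1 ∨ (a.1 = b.1 ∧ b.2 < a.2)

/-- `α + β` is defined in `R⁺`. -/
def rdef {n : ℕ} (a b : Pr n) : Prop := a.2 = b.1 ∨ b.2 = a.1

/-- The sum `α + β` (when defined). -/
def rsum {n : ℕ} (a b : Pr n) : Pr n := if a.2 = b.1 then (a.1, b.2) else (b.1, a.2)

/-! Algebra groups. -/

/-- The algebra group `H = 1 + 𝔫`. -/
def algH (nn : Submodule F (Matrix (Fin n) (Fin n) F)) : Set (Matrix (Fin n) (Fin n) F) :=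
  {M | ∃ X ∈ nn, M = 1 + X}

/-- The two sided orbit `H X H ⊆ 𝔫` of `X`. -/
def algBiOrbit (nn : Submodule F (Matrix (Fin n) (Fin n) F))
    (X : Matrix (Fin n) (Fin n) F) : Set nn :=
  {Y | ∃ u ∈ algH nn, ∃ v ∈ algH nn, (Y : Matrix (Fin n) (Fin n) F) = u * X * v}

/-- The right orbit `{λ · u : u ∈ H} ⊆ 𝔫*` of a functional `λ`, described via
`λ' = λ · u⁻¹ ↔ (∀ Y, λ' Y = λ (Y u))`. -/
def algRightOrbit (nn : Submodule F (Matrix (Fin n) (Fin n) F))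
    (l : Module.Dual F nn) : Set (Module.Dual F nn) :=
  {l' | ∃ u ∈ algH nn, ∀ (Y : nn) (h : (Y : Matrix (Fin n) (Fin n) F) * u ∈ nn),
      l' Y = l ⟨(Y : Matrix (Fin n) (Fin n) F) * u, h⟩}

/-- The supercharacter `χ^λ` of an algebra group, evaluated at `1 + X`. -/
noncomputable def algSuperchar (nn : Submodule F (Matrix (Fin n) (Fin n) F))
    (θ : AddChar F ℂ) (l : Module.Dual F nn) (X : Matrix (Fin n) (Fin n) F) : ℂ :=
  ((Nat.card (algRightOrbit nn l) : ℂ) / (Nat.card (algBiOrbit nn X) : ℂ)) *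
    ∑ᶠ Y ∈ algBiOrbit nn X, (starRingEnd ℂ) (θ (l Y))

/-! Algebra groups with a fixed basis `X_1, …, X_d` of `𝔫`. -/

/-- `X_ρ = Σ_i ρ_i X_i`. -/
def bigX {d : ℕ} (Xb : Fin d → Matrix (Fin n) (Fin n) F) (ρ : Fin d → F) :
    Matrix (Fin n) (Fin n) F :=
  ∑ i : Fin d, ρ i • Xb i

/-- The two-sided orbit of `X_φ`, in coordinates. -/
def algCoeffBiOrbit {d : ℕ} (Xb : Fin d → Matrix (Fin n) (Fin n) F) (φ : Fin d → F) :
    Set (Fin d → F) :=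
  {ρ | ∃ ζ₁ ζ₂ : Fin d → F,
      (1 + bigX Xb ζ₁) * bigX Xb φ * (1 + bigX Xb ζ₂) = bigX Xb ρ}

/-- The right orbit of `λ_η`, in coordinates (`λ_η(X_ν) = η ⬝ᵥ ν`). -/
def algCoeffRightOrbit {d : ℕ} (Xb : Fin d → Matrix (Fin n) (Fin n) F) (η : Fin d → F) :
    Set (Fin d → F) :=
  {η' | ∃ ζ : Fin d → F, ∀ ρ ν : Fin d → F,
      bigX Xb ρ * (1 + bigX Xb ζ) = bigX Xb ν → η' ⬝ᵥ ρ = η ⬝ᵥ ν}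

/-- The supercharacter `χ^η` of an algebra group with fixed basis, evaluated at `x_φ`. -/
noncomputable def algCoeffSuperchar {d : ℕ} (Xb : Fin d → Matrix (Fin n) (Fin n) F)
    (θ : AddChar F ℂ) (η φ : Fin d → F) : ℂ :=
  ((Nat.card (algCoeffRightOrbit Xb η) : ℂ) / (Nat.card (algCoeffBiOrbit Xb φ) : ℂ)) *
    ∑ᶠ ρ ∈ algCoeffBiOrbit Xb φ, (starRingEnd ℂ) (θ (η ⬝ᵥ ρ))

/-- `(C_i)_{jk} = c_{ij}^k`. -/
def Cleft {d : ℕ} (c : Fin d → Fin d → Fin d → F) (i : Fin d) : Matrix (Fin d) (Fin d) F :=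
  Matrix.of fun j k => c i j k

/-- `(C^j)_{ik} = c_{ij}^k`. -/
def Cright {d : ℕ} (c : Fin d → Fin d → Fin d → F) (j : Fin d) : Matrix (Fin d) (Fin d) F :=
  Matrix.of fun i k => c i j k

/-- `(M_φ^η)_{ij} = φ C_i C^j η`. -/
def algMmesh {d : ℕ} (c : Fin d → Fin d → Fin d → F) (φ η : Fin d → F) :
    Matrix (Fin d) (Fin d) F :=
  Matrix.of fun i j => φ ⬝ᵥ (Cleft c i * Cright c j).mulVec η

/-- `(a_φ^η)_i = φ C_i η`. -/
def algAVec {d : ℕ} (c : Fin d → Fin d → Fin d → F) (φ η : Fin d → F) : Fin d → F :=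
  fun i => φ ⬝ᵥ (Cleft c i).mulVec η

/-- `(b_φ^η)_j = φ C^j η`. -/
def algBVec {d : ℕ} (c : Fin d → Fin d → Fin d → F) (φ η : Fin d → F) : Fin d → F :=
  fun j => φ ⬝ᵥ (Cright c j).mulVec η

/-- `φ` meshes with `η` (algebra-group version). -/
def algMeshes {d : ℕ} (c : Fin d → Fin d → Fin d → F) (φ η : Fin d → F) : Prop :=
  (∃ b : Fin d → F, (algMmesh c φ η).mulVec b = -algAVec c φ η) ∧
  ∀ v : Fin d → F, (algMmesh c φ η).mulVec v = 0 → algBVec c φ η ⬝ᵥ v = 0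

/-!
Every `u ∈ U_J` is `1 + X_ψ`, so `λ_η(X_φ (1 + X_ψ)) = λ_η(X_φ) + λ_η(X_φ X_ψ)`, and the second
summand is the functional whose coefficient vector is `M_R^η ψ`. Since `U_J` is a group, `u⁻¹`
ranges over all of `U_J` with `u`, hence the right orbit of `λ_η` is the affine subspace
`η + im M_R^η`, which has `q ^ rank M_R^η` elements. The left orbit is `η + im M_L^η` in the same
way, and `M_R^η = (M_L^η)ᵀ`.
-/

section

variable {F : Type*} [Field F] {n : ℕ} {J : Finset (Pr n)}

lemma Closed.notMem_diag (hJ : Closed J) (i : Fin n) : (i, i) ∉ J :=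
  fun h => lt_irrefl i (hJ.1 _ h)

lemma Xmat_mem_nJset (φ : Pr n → F) : Xmat J φ ∈ nJset J :=
  fun _ _ h => if_neg h

lemma eq_Xmat_of_mem_nJset {X : Matrix (Fin n) (Fin n) F} (hX : X ∈ nJset J) :
    X = Xmat J fun p => X p.1 p.2 := by
  ext i j
  by_cases h : (i, j) ∈ J
  · simp [Xmat, h]
  · simp [Xmat, h, hX i j h]

lemma add_mem_nJset {X Y : Matrix (Fin n) (Fin n) F} (hX : X ∈ nJset J) (hY : Y ∈ nJset J) :
    X + Y ∈ nJset J :=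
  fun i j h => by rw [Matrix.add_apply, hX i j h, hY i j h, add_zero]

lemma mul_mem_nJset (hJ : Closed J) {X Y : Matrix (Fin n) (Fin n) F} (hX : X ∈ nJset J)
    (hY : Y ∈ nJset J) : X * Y ∈ nJset J := by
  intro i j hij
  rw [mul_apply]
  refine Finset.sum_eq_zero fun k _ => ?_
  by_cases hik : (i, k) ∈ J
  · have hkj : (k, j) ∉ J := fun hkj => hij (hJ.2 i k j hik hkj)
    rw [hY k j hkj, mul_zero]
  · rw [hX i k hik, zero_mul]

lemma mem_UJ_iff_sub_one_mem_nJset (hJ : Closed J) {u : Matrix (Fin n) (Fin n) F} :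
    u ∈ UJ J ↔ u - 1 ∈ nJset J := by
  constructor
  · rintro ⟨hdiag, hoff⟩ i j h
    by_cases hij : i = j
    · subst hij; simp [hdiag]
    · simp [one_apply_ne hij, hoff i j hij h]
  · intro hu
    refine ⟨fun i => ?_, fun i j hij h => ?_⟩
    · simpa [sub_eq_zero] using hu i i (hJ.notMem_diag i)
    · simpa [one_apply_ne hij] using hu i j h

lemma mem_UJ_iff (hJ : Closed J) {u : Matrix (Fin n) (Fin n) F} :
    u ∈ UJ J ↔ ∃ ψ : Pr n → F, u = 1 + Xmat J ψ := by
  rw [mem_UJ_iff_sub_one_mem_nJset hJ]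
  constructor
  · intro hu
    exact ⟨_, by rw [← eq_Xmat_of_mem_nJset hu, add_sub_cancel]⟩
  · rintro ⟨ψ, rfl⟩
    simpa using Xmat_mem_nJset ψ

lemma mul_mem_UJ (hJ : Closed J) {u v : Matrix (Fin n) (Fin n) F} (hu : u ∈ UJ J)
    (hv : v ∈ UJ J) : u * v ∈ UJ J := by
  rw [mem_UJ_iff_sub_one_mem_nJset hJ] at hu hv ⊢
  have : u * v - 1 = (u - 1) + (v - 1) + (u - 1) * (v - 1) := by noncomm_ring
  rw [this]
  exact add_mem_nJset (add_mem_nJset hu hv) (mul_mem_nJset hJ hu hv)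

lemma one_mem_UJ (hJ : Closed J) : (1 : Matrix (Fin n) (Fin n) F) ∈ UJ J :=
  (mem_UJ_iff_sub_one_mem_nJset hJ).2 (by rw [sub_self]; exact fun _ _ _ => rfl)

lemma det_eq_one_of_mem_UJ (hJ : Closed J) {u : Matrix (Fin n) (Fin n) F} (hu : u ∈ UJ J) :
    u.det = 1 := by
  have hupper : u.IsUpperTriangular := fun i j hji =>
    hu.2 i j (ne_of_gt hji) fun h => (hJ.1 _ h).not_gt hji
  simp [det_of_isUpperTriangular hupper, hu.1]

/-- In a finite group the inverse of `u` is a power of `u`, and `U_J` is closed under products. -/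
lemma inv_mem_UJ [Finite F] (hJ : Closed J) {u : Matrix (Fin n) (Fin n) F} (hu : u ∈ UJ J) :
    u⁻¹ ∈ UJ J := by
  have hunit : IsUnit u := (isUnit_iff_isUnit_det u).2 (by simp [det_eq_one_of_mem_UJ hJ hu])
  obtain ⟨g, rfl⟩ := hunit
  have hk := (isOfFinOrder_of_finite g).orderOf_pos
  have hinv : (↑g : Matrix (Fin n) (Fin n) F)⁻¹ = ↑g ^ (orderOf g - 1) := by
    refine inv_eq_right_inv ?_
    rw [← pow_succ', Nat.sub_add_cancel hk, ← Units.val_pow_eq_pow_val, pow_orderOf_eq_one,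
      Units.val_one]
  rw [hinv]
  induction orderOf g - 1 with
  | zero => exact one_mem_UJ hJ
  | succ k ih => rw [pow_succ]; exact mul_mem_UJ hJ ih hu

lemma lam_add (η : Pr n → F) (X Y : Matrix (Fin n) (Fin n) F) :
    lam J η (X + Y) = lam J η X + lam J η Y := by
  simp only [lam, Matrix.add_apply, mul_add, Finset.sum_add_distrib]

lemma restrict_dotProduct_restrict (a b : Pr n → F) :
    J.restrict a ⬝ᵥ J.restrict b = ∑ p ∈ J, a p * b p :=
  Finset.sum_coe_sort J fun p => a p * b p

lemma lam_Xmat (η φ : Pr n → F) : lam J η (Xmat J φ) = J.restrict η ⬝ᵥ J.restrict φ := by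
  rw [restrict_dotProduct_restrict]
  exact Finset.sum_congr rfl fun p hp => by simp [Xmat, hp]

lemma lamSub_Xmat (η' : J → F) (φ : Pr n → F) : lamSub J η' (Xmat J φ) = η' ⬝ᵥ J.restrict φ :=
  Finset.sum_congr rfl fun p _ => by simp [Xmat, p.2]

lemma sum_mem_mul_eq_sum_Xmat_mul (φ g : Pr n → F) :
    ∑ p ∈ J, φ p * g p = ∑ i, ∑ j, Xmat J φ i j * g (i, j) := by
  rw [← Fintype.sum_ite_mem, Fintype.sum_prod_type]
  simp [Xmat, ite_mul]

lemma lam_eq_sum_of_mem_nJset (η : Pr n → F) {X : Matrix (Fin n) (Fin n) F} (hX : X ∈ nJset J) :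
    lam J η X = ∑ i, ∑ j, η (i, j) * X i j := by
  rw [lam, ← Fintype.sum_ite_mem, Fintype.sum_prod_type]
  refine Fintype.sum_congr _ _ fun i => Fintype.sum_congr _ _ fun j => ?_
  by_cases h : (i, j) ∈ J
  · simp [h]
  · simp [h, hX i j h]

lemma MetaR_mulVec_restrict (η ψ : Pr n → F) :
    MetaR J η *ᵥ J.restrict ψ = J.restrict fun q => ∑ l, η (q.1, l) * Xmat J ψ q.2 l := by
  ext q
  have hterm : ∀ r : J, MetaR J η q r * ψ r =
      if r.1.1 = q.1.2 then η (q.1.1, r.1.2) * ψ r else 0 := fun r => by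
    by_cases h : r.1.1 = q.1.2
    · have hr : (q.1.2, r.1.2) ∈ J := h ▸ r.2
      simp [MetaR, h, hr]
    · simp [MetaR, h]
  rw [mulVec, dotProduct]
  simp only [Finset.restrict, hterm]
  rw [Finset.sum_coe_sort J fun p => if p.1 = q.1.2 then η (q.1.1, p.2) * ψ p else 0,
    ← Fintype.sum_ite_mem, Fintype.sum_prod_type,
    Fintype.sum_eq_single q.1.2 fun k hk => Finset.sum_eq_zero fun l _ => by simp [hk]]
  simp [Xmat]

lemma lam_Xmat_mul_Xmat_eq_MetaR (hJ : Closed J) (η φ ψ : Pr n → F) :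
    lam J η (Xmat J φ * Xmat J ψ) = J.restrict φ ⬝ᵥ MetaR J η *ᵥ J.restrict ψ := by
  rw [lam_eq_sum_of_mem_nJset η (mul_mem_nJset hJ (Xmat_mem_nJset φ) (Xmat_mem_nJset ψ)),
    MetaR_mulVec_restrict, restrict_dotProduct_restrict, sum_mem_mul_eq_sum_Xmat_mul]
  simp only [mul_apply, Finset.mul_sum]
  refine Finset.sum_congr rfl fun i _ => ?_
  rw [Finset.sum_comm]
  exact Finset.sum_congr rfl fun j _ => Finset.sum_congr rfl fun l _ => by ring

lemma MetaR_eq_transpose (η : Pr n → F) : MetaR J η = (MetaL J η)ᵀ := by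
  ext p q
  by_cases h : q.1.1 = p.1.2
  · have hq : (p.1.2, q.1.2) ∈ J := h ▸ q.2
    simp [MetaR, MetaL, h, hq]
  · simp [MetaR, MetaL, h, Ne.symm h]

lemma lam_Xmat_mul_Xmat_eq_MetaL (hJ : Closed J) (η φ ψ : Pr n → F) :
    lam J η (Xmat J ψ * Xmat J φ) = J.restrict φ ⬝ᵥ MetaL J η *ᵥ J.restrict ψ := by
  rw [lam_Xmat_mul_Xmat_eq_MetaR hJ, MetaR_eq_transpose, dotProduct_mulVec, vecMul_transpose,
    dotProduct_comm]

lemma _root_.Finset.restrict_surjective {ι M : Type*} [Zero M] (s : Finset ι) :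
    Function.Surjective (s.restrict (π := fun _ => M)) := by
  classical
  exact fun v => ⟨fun i => if h : i ∈ s then v ⟨i, h⟩ else 0, funext fun i => dif_pos i.2⟩

lemma card_range_add_mulVec [Fintype F] {m l : Type*} [Fintype l] (M : Matrix m l F)
    (c : m → F) : Nat.card (Set.range fun x => c + M *ᵥ x) = Fintype.card F ^ M.rank := by
  have : Set.range (fun x => c + M *ᵥ x) = (c + ·) '' LinearMap.range M.mulVecLin := by
    rw [LinearMap.coe_range, ← Set.range_comp]
    rfl
  rw [this, Nat.card_image_of_injective (add_right_injective c), SetLike.coe_sort_coe,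
    Module.natCard_eq_pow_finrank (K := F), Nat.card_eq_fintype_card]
  rfl

lemma setOf_orbit_eq_range [Finite F] (hJ : Closed J) (η : Pr n → F) (M : Matrix J J F)
    (act : Matrix (Fin n) (Fin n) F → Matrix (Fin n) (Fin n) F → Matrix (Fin n) (Fin n) F)
    (hact : ∀ φ ψ, lam J η (act (Xmat J φ) (1 + Xmat J ψ)) =
      (J.restrict η + M *ᵥ J.restrict ψ) ⬝ᵥ J.restrict φ) :
    {η' : J → F | ∃ u, u ∈ UJ J ∧ ∀ φ, lamSub J η' (Xmat J φ) = lam J η (act (Xmat J φ) u⁻¹)}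
      = Set.range fun x => J.restrict η + M *ᵥ x := by
  ext η'
  simp only [Set.mem_range, lamSub_Xmat]
  constructor
  · rintro ⟨u, hu, h⟩
    obtain ⟨ψ, hψ⟩ := (mem_UJ_iff hJ).1 (inv_mem_UJ hJ hu)
    refine ⟨J.restrict ψ, (dotProduct_eq _ _ fun v => ?_).symm⟩
    obtain ⟨φ, rfl⟩ := J.restrict_surjective v
    rw [h φ, hψ, hact]
  · rintro ⟨x, rfl⟩
    obtain ⟨ψ, rfl⟩ := J.restrict_surjective x
    have hu : 1 + Xmat J ψ ∈ UJ J := (mem_UJ_iff hJ).2 ⟨ψ, rfl⟩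
    refine ⟨(1 + Xmat J ψ)⁻¹, inv_mem_UJ hJ hu, fun φ => ?_⟩
    rw [nonsing_inv_nonsing_inv _ (by simp [det_eq_one_of_mem_UJ hJ hu]), hact]

end

theorem stmt11_general {F : Type*} [Field F] [Fintype F] {n : ℕ}
    (J : Finset (Pr n)) (hJ : Closed J) (η : Pr n → F) :
    Nat.card {η' : {p // p ∈ J} → F |
        ∃ u : Matrix (Fin n) (Fin n) F, u ∈ UJ J ∧
          ∀ φ : Pr n → F, lamSub J η' (Xmat J φ) = lam J η (Xmat J φ * u⁻¹)}
      = Fintype.card F ^ corank J η ∧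
    Nat.card {η' : {p // p ∈ J} → F |
        ∃ u : Matrix (Fin n) (Fin n) F, u ∈ UJ J ∧
          ∀ φ : Pr n → F, lamSub J η' (Xmat J φ) = lam J η (u⁻¹ * Xmat J φ)}
      = Fintype.card F ^ corank J η := by
  have hright := setOf_orbit_eq_range hJ η (MetaR J η) (fun X u => X * u) fun φ ψ => by
    rw [mul_add, mul_one, lam_add, lam_Xmat, lam_Xmat_mul_Xmat_eq_MetaR hJ, add_dotProduct,
      dotProduct_comm (_ *ᵥ _)]
  have hleft := setOf_orbit_eq_range hJ η (MetaL J η) (fun X u => u * X) fun φ ψ => by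
    rw [add_mul, one_mul, lam_add, lam_Xmat, lam_Xmat_mul_Xmat_eq_MetaL hJ, add_dotProduct,
      dotProduct_comm (_ *ᵥ _)]
  refine ⟨?_, ?_⟩
  · rw [hright, card_range_add_mulVec, MetaR_eq_transpose, rank_transpose]
    rfl
  · rw [hleft, card_range_add_mulVec]
    rfl

theorem stmt11 {F : Type*} [Field F] [Fintype F] [DecidableEq F] {n : ℕ}
    (J : Finset (Pr n)) (hJ : Closed J) (η : Pr n → F) :
    Nat.card {η' : {p // p ∈ J} → F |
        ∃ u : Matrix (Fin n) (Fin n) F, u ∈ UJ J ∧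
          ∀ φ : Pr n → F, lamSub J η' (Xmat J φ) = lam J η (Xmat J φ * u⁻¹)}
      = Fintype.card F ^ corank J η ∧
    Nat.card {η' : {p // p ∈ J} → F |
        ∃ u : Matrix (Fin n) (Fin n) F, u ∈ UJ J ∧
          ∀ φ : Pr n → F, lamSub J η' (Xmat J φ) = lam J η (u⁻¹ * Xmat J φ)}
      = Fintype.card F ^ corank J η :=
  stmt11_general J hJ η

end SCT
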